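/- Let n₁ > 2 be a real number, q > 1 and a > 0, and let ψ ∈ 𝒜 satisfy ψ(r) ∼ a r^q as r → +∞. Then ∫₁^∞ ψ(t)^{−1} dt < ∞, and the change of variables s = s(r) defined by 1/((n₁−2)s^{n₁−2}) = ∫_r^∞ ψ(t)^{−1} dt, with inverse r = r(s), and the weight ρ(s) := ψ(r(s))²/s^{2(n₁−1)} satisfy: s(r) ∼ c r^{(q−1)/(n₁−2)} as r → +∞, where c := [a(q−1)/(n₁−2)]^{1/(n₁−2)}, and ρ(s) ∼ c̃ s^{2(n₁−q−1)/(q−1)} as s → +∞, where c̃ := a² [(n₁−2)/(a(q−1))]^{2q/(q−1)}. -/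

import Mathlib

/-- The class `𝒜` of model functions: `ψ ∈ C^∞((0,∞)) ∩ C¹([0,∞))` with `ψ(0) = 0`,
`ψ'(0) = 1` (one-sided derivative) and `ψ > 0` on `(0,∞)`. -/
def classA (ψ : ℝ → ℝ) : Prop :=
  ContDiffOn ℝ (⊤ : ℕ∞) ψ (Set.Ioi 0) ∧ ContDiffOn ℝ 1 ψ (Set.Ici 0) ∧
  ψ 0 = 0 ∧ derivWithin ψ (Set.Ici 0) 0 = 1 ∧ ∀ r > (0 : ℝ), 0 < ψ r

/-- The two-dimensional change of variables `s = s(r)` (into Euclidean dimension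
`n₁ > 2`, a real number) determined by `1/((n₁-2) s^{n₁-2}) = ∫_r^∞ ψ(t)^{-1} dt`. -/
noncomputable def Svar2 (n₁ : ℝ) (ψ : ℝ → ℝ) (r : ℝ) : ℝ :=
  ((n₁ - 2) * ∫ t in Set.Ioi r, 1 / ψ t) ^ (-(1 / (n₁ - 2)))


open Set Filter MeasureTheory Real


section
variable {ψ : ℝ → ℝ} {q a : ℝ}

lemma inv_cont (hcont : ContinuousOn ψ (Set.Ioi 0)) (hpos : ∀ r > (0:ℝ), 0 < ψ r) :
    ContinuousOn (fun t => 1 / ψ t) (Set.Ioi 0) :=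
  ContinuousOn.div continuousOn_const hcont (fun t ht => (hpos t ht).ne')

lemma ev_bounds (hq : 1 < q) (ha : 0 < a)
    (hψasymp : Tendsto (fun r => ψ r / (a * r ^ q)) atTop (nhds 1))
    {ε : ℝ} (hε : 0 < ε) (hε1 : ε < 1) :
    ∀ᶠ t in atTop, (1 - ε) * (a * t ^ q) ≤ ψ t ∧ ψ t ≤ (1 + ε) * (a * t ^ q) := by
  have h1 := hψasymp.eventually (Metric.ball_mem_nhds (1:ℝ) hε)
  filter_upwards [h1, eventually_gt_atTop 0] with t ht htpos
  have hb : 0 < a * t ^ q := by positivity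
  simp only [Metric.mem_ball, Real.dist_eq] at ht
  have := abs_lt.mp ht
  have h1' : 1 - ε < ψ t / (a * t ^ q) := by linarith [this.1]
  have h2' : ψ t / (a * t ^ q) < 1 + ε := by linarith [this.2]
  exact ⟨le_of_lt ((lt_div_iff₀ hb).mp h1'), le_of_lt ((div_lt_iff₀ hb).mp h2')⟩

lemma integrableOn_inv_psi (hq : 1 < q) (ha : 0 < a)
    (hcont : ContinuousOn ψ (Set.Ioi 0)) (hpos : ∀ r > (0:ℝ), 0 < ψ r)
    (hψasymp : Tendsto (fun r => ψ r / (a * r ^ q)) atTop (nhds 1))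
    {r : ℝ} (hr : 0 < r) : IntegrableOn (fun t => 1 / ψ t) (Set.Ioi r) := by
  obtain ⟨R, hR⟩ := (ev_bounds hq ha hψasymp (by norm_num : (0:ℝ) < 1/2) (by norm_num)).exists_forall_of_atTop
  set R' := max R (max r 1) with hR'
  have hrR' : r ≤ R' := le_max_of_le_right (le_max_left _ _)
  have hR'pos : (0:ℝ) < R' := lt_of_lt_of_le hr hrR'
  have hsplit : Set.Ioi r = Set.Ioc r R' ∪ Set.Ioi R' := (Set.Ioc_union_Ioi_eq_Ioi hrR').symm
  rw [hsplit]
  apply MeasureTheory.IntegrableOn.union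
  · have : IntegrableOn (fun t => 1 / ψ t) (Set.Icc r R') :=
      (ContinuousOn.integrableOn_Icc ((inv_cont hcont hpos).mono (fun x hx => Set.mem_Ioi.mpr (lt_of_lt_of_le hr hx.1))))
    exact this.mono_set Set.Ioc_subset_Icc_self
  · have hmeas : AEStronglyMeasurable (fun t => 1 / ψ t) (volume.restrict (Set.Ioi R')) :=
      ((inv_cont hcont hpos).mono (fun x hx => lt_trans hR'pos hx)).aestronglyMeasurable measurableSet_Ioi
    have hint : IntegrableOn (fun t => (2 / a) * t ^ (-q)) (Set.Ioi R') :=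
      (integrableOn_Ioi_rpow_of_lt (by linarith) hR'pos).const_mul _
    apply MeasureTheory.Integrable.mono' hint hmeas
    rw [MeasureTheory.ae_restrict_iff' measurableSet_Ioi]
    filter_upwards with t ht
    have htR : R ≤ t := le_of_lt (lt_of_le_of_lt (le_max_left _ _) ht)
    have htpos : (0:ℝ) < t := lt_trans hR'pos ht
    have hb := (hR t htR).1
    have htq : (0:ℝ) < t ^ q := Real.rpow_pos_of_pos htpos q
    have hψt : (0:ℝ) < ψ t := hpos t htpos
    have h2 : (1:ℝ)/2 * (a * t ^ q) ≤ ψ t := by norm_num at hb ⊢; linarith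
    rw [Real.norm_eq_abs, abs_of_pos (by positivity : (0:ℝ) < 1 / ψ t)]
    rw [Real.rpow_neg htpos.le, div_le_iff₀ hψt]
    have heq : 2 / a * (t ^ q)⁻¹ * ψ t = 2 * ψ t / (a * t ^ q) := by field_simp
    rw [heq, le_div_iff₀ (by positivity)]
    linarith
end

section
variable {ψ : ℝ → ℝ} {q a n₁ : ℝ}

lemma int_pos_on (hpos : ∀ r > (0:ℝ), 0 < ψ r) {s : Set ℝ} (hs : MeasurableSet s)
    (hsub : s ⊆ Set.Ioi 0) (hvol : 0 < MeasureTheory.volume s)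
    (hint : IntegrableOn (fun t => 1 / ψ t) s) :
    0 < ∫ t in s, 1 / ψ t := by
  have hnn : 0 ≤ᵐ[volume.restrict s] (fun t => 1 / ψ t) := by
    rw [Filter.EventuallyLE, MeasureTheory.ae_restrict_iff' hs]
    filter_upwards with t ht
    exact le_of_lt (one_div_pos.mpr (hpos t (hsub ht)))
  rw [MeasureTheory.setIntegral_pos_iff_support_of_nonneg_ae hnn hint]
  refine lt_of_lt_of_le hvol (measure_mono fun t ht => ⟨?_, ht⟩)
  exact ne_of_gt (one_div_pos.mpr (hpos t (hsub ht)))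

lemma F_split (hpos : ∀ r > (0:ℝ), 0 < ψ r)
    {r₁ r₂ : ℝ} (h1 : 0 < r₁) (h12 : r₁ ≤ r₂)
    (hint : IntegrableOn (fun t => 1 / ψ t) (Set.Ioi r₁)) :
    (∫ t in Set.Ioi r₁, 1 / ψ t)
      = (∫ t in Set.Ioc r₁ r₂, 1 / ψ t) + ∫ t in Set.Ioi r₂, 1 / ψ t := by
  rw [← MeasureTheory.setIntegral_union (Set.Ioc_disjoint_Ioi le_rfl) measurableSet_Ioi
      (hint.mono_set Set.Ioc_subset_Ioi_self)
      (hint.mono_set (Set.Ioi_subset_Ioi h12)), Set.Ioc_union_Ioi_eq_Ioi h12]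

lemma F_strict_anti (hpos : ∀ r > (0:ℝ), 0 < ψ r)
    (hintall : ∀ r > (0:ℝ), IntegrableOn (fun t => 1 / ψ t) (Set.Ioi r))
    {r₁ r₂ : ℝ} (h1 : 0 < r₁) (h12 : r₁ < r₂) :
    (∫ t in Set.Ioi r₂, 1 / ψ t) < ∫ t in Set.Ioi r₁, 1 / ψ t := by
  rw [F_split hpos h1 h12.le (hintall r₁ h1)]
  have : 0 < ∫ t in Set.Ioc r₁ r₂, 1 / ψ t := by
    refine int_pos_on hpos measurableSet_Ioc (fun t ht => lt_trans h1 ht.1) ?_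
      ((hintall r₁ h1).mono_set Set.Ioc_subset_Ioi_self)
    rw [Real.volume_Ioc]
    simp [h12]
  linarith

lemma F_pos (hpos : ∀ r > (0:ℝ), 0 < ψ r)
    {r : ℝ} (hr : 0 < r) (hint : IntegrableOn (fun t => 1 / ψ t) (Set.Ioi r)) :
    0 < ∫ t in Set.Ioi r, 1 / ψ t := by
  refine int_pos_on hpos measurableSet_Ioi (fun t ht => lt_trans hr ht) ?_ hint
  simp [Real.volume_Ioi]

end

section
variable {ψ : ℝ → ℝ} {q a n₁ : ℝ}

lemma F_eq_primitive (hpos : ∀ r > (0:ℝ), 0 < ψ r)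
    (hintall : ∀ r > (0:ℝ), IntegrableOn (fun t => 1 / ψ t) (Set.Ioi r))
    {r : ℝ} (hr : 0 < r) :
    (∫ t in Set.Ioi r, 1 / ψ t)
      = (∫ t in Set.Ioi 1, 1 / ψ t) - ∫ t in (1:ℝ)..r, 1 / ψ t := by
  rcases le_or_gt 1 r with h | h
  · rw [intervalIntegral.integral_of_le h]
    have := F_split hpos one_pos h (hintall 1 one_pos)
    linarith
  · rw [intervalIntegral.integral_symm, intervalIntegral.integral_of_le h.le]
    have := F_split hpos hr h.le (hintall r hr)
    linarith

lemma F_contAt (hcont : ContinuousOn ψ (Set.Ioi 0)) (hpos : ∀ r > (0:ℝ), 0 < ψ r)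
    (hintall : ∀ r > (0:ℝ), IntegrableOn (fun t => 1 / ψ t) (Set.Ioi r))
    {x : ℝ} (hx : 0 < x) :
    ContinuousAt (fun r => ∫ t in Set.Ioi r, 1 / ψ t) x := by
  have hIcont := inv_cont hcont hpos
  have hf : IntervalIntegrable (fun t => 1 / ψ t) volume 1 x := by
    apply ContinuousOn.intervalIntegrable
    exact hIcont.mono (fun t ht => lt_of_lt_of_le (lt_min one_pos hx) ht.1)
  have hP : HasDerivAt (fun u => ∫ t in (1:ℝ)..u, 1 / ψ t) (1 / ψ x) x :=
    intervalIntegral.integral_hasDerivAt_right hf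
      (hIcont.stronglyMeasurableAtFilter isOpen_Ioi x hx)
      (hIcont.continuousAt (Ioi_mem_nhds hx))
  have : ContinuousAt (fun r => (∫ t in Set.Ioi 1, 1 / ψ t) - ∫ t in (1:ℝ)..r, 1 / ψ t) x :=
    continuousAt_const.sub hP.continuousAt
  apply this.congr
  filter_upwards [Ioi_mem_nhds hx] with r hr
  exact (F_eq_primitive hpos hintall hr).symm

lemma psi_le_near_zero (hψA : classA ψ) : ∀ᶠ t in nhdsWithin 0 (Set.Ioi 0), ψ t ≤ 2 * t := by
  obtain ⟨_, hC1, h0, hd, hpos⟩ := hψA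
  have hdiff : DifferentiableWithinAt ℝ ψ (Set.Ici 0) 0 :=
    (hC1.differentiableOn one_ne_zero) 0 Set.self_mem_Ici
  have hD : HasDerivWithinAt ψ 1 (Set.Ici 0) 0 := hd ▸ hdiff.hasDerivWithinAt
  have hslope := hasDerivWithinAt_iff_tendsto_slope.mp hD
  rw [Set.Ici_sdiff_left] at hslope
  have hev := hslope.eventually (eventually_lt_nhds (by norm_num : (1:ℝ) < 2))
  filter_upwards [hev, self_mem_nhdsWithin] with t ht htpos
  simp only [slope_def_field, div_eq_iff] at ht
  have htp : (0:ℝ) < t := htpos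
  have : (ψ t - ψ 0) / (t - 0) < 2 := ht
  rw [h0, sub_zero, sub_zero, div_lt_iff₀ htp] at this
  linarith

lemma F_tendsto_top (hψA : classA ψ)
    (hintall : ∀ r > (0:ℝ), IntegrableOn (fun t => 1 / ψ t) (Set.Ioi r)) :
    Tendsto (fun r => ∫ t in Set.Ioi r, 1 / ψ t) (nhdsWithin 0 (Set.Ioi 0)) atTop := by
  have hpos := hψA.2.2.2.2
  obtain ⟨δ, hδmem, hδ⟩ := mem_nhdsGT_iff_exists_Ioc_subset.mp (psi_le_near_zero hψA)
  have hδpos : (0:ℝ) < δ := hδmem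
  rw [tendsto_atTop]
  intro b
  set r₀ := min δ (δ * Real.exp (-(2*b))) with hr₀
  have hr₀pos : 0 < r₀ := lt_min hδpos (by positivity)
  have hIoc : Set.Ioc 0 r₀ ∈ nhdsWithin (0:ℝ) (Set.Ioi 0) := Ioc_mem_nhdsGT_of_mem ⟨le_rfl, hr₀pos⟩
  filter_upwards [hIoc] with r hr
  have hrpos : 0 < r := hr.1
  have hrδ : r ≤ δ := le_trans hr.2 (min_le_left _ _)
  -- lower bound by log integral
  have hFsplit := F_split hpos hrpos hrδ (hintall r hrpos)
  have hFδ : 0 < ∫ t in Set.Ioi δ, 1 / ψ t := F_pos hpos hδpos (hintall δ hδpos)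
  have hmono : (∫ t in Set.Ioc r δ, (1 / (2*t))) ≤ ∫ t in Set.Ioc r δ, 1 / ψ t := by
    apply MeasureTheory.setIntegral_mono_on
    · refine (ContinuousOn.integrableOn_Icc ?_).mono_set Set.Ioc_subset_Icc_self
      exact ContinuousOn.div continuousOn_const
        (by fun_prop) (fun t ht => by
          have : 0 < t := lt_of_lt_of_le hrpos ht.1; positivity)
    · exact (hintall r hrpos).mono_set Set.Ioc_subset_Ioi_self
    · exact measurableSet_Ioc
    · intro t ht
      have htpos : 0 < t := lt_of_lt_of_le hrpos (le_of_lt ht.1)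
      have hψt : 0 < ψ t := hpos t htpos
      have hle : ψ t ≤ 2 * t := hδ ⟨htpos, ht.2⟩
      exact one_div_le_one_div_of_le hψt hle
  have hlog : (∫ t in Set.Ioc r δ, (1 / (2*t))) = (1/2) * Real.log (δ / r) := by
    rw [← intervalIntegral.integral_of_le hrδ]
    have : ∀ᵉ (x ∈ Set.uIcc r δ), (1:ℝ) / (2*x) = (1/2) * (1/x) := by
      intro x hx; ring
    rw [intervalIntegral.integral_congr this, intervalIntegral.integral_const_mul,
      integral_one_div]
    intro h0mem
    rw [Set.uIcc_of_le hrδ] at h0mem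
    exact absurd h0mem.1 (not_le.mpr hrpos)
  have hlogb : 2 * b ≤ Real.log (δ / r) := by
    have hrle : r ≤ δ * Real.exp (-(2*b)) := le_trans hr.2 (min_le_right _ _)
    have : Real.exp (2*b) ≤ δ / r := by
      rw [le_div_iff₀ hrpos]
      calc Real.exp (2*b) * r ≤ Real.exp (2*b) * (δ * Real.exp (-(2*b))) := by
            exact mul_le_mul_of_nonneg_left hrle (Real.exp_pos _).le
        _ = δ := by rw [mul_comm δ, ← mul_assoc, ← Real.exp_add]; simp
    calc 2*b = Real.log (Real.exp (2*b)) := (Real.log_exp _).symm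
      _ ≤ _ := Real.log_le_log (Real.exp_pos _) this
  linarith

end

section
variable {ψ : ℝ → ℝ} {q a n₁ : ℝ}

lemma integral_tail_rpow (hq : 1 < q) {r : ℝ} (hr : 0 < r) :
    (∫ t in Set.Ioi r, t ^ (-q)) = r ^ (1-q) / (q-1) := by
  rw [integral_Ioi_rpow_of_lt (by linarith) hr]
  have h1 : -q + 1 = 1 - q := by ring
  rw [h1]
  rw [div_eq_div_iff (by linarith) (by linarith)]
  ring

lemma F_bounds (hq : 1 < q) (ha : 0 < a)
    (hcont : ContinuousOn ψ (Set.Ioi 0)) (hpos : ∀ r > (0:ℝ), 0 < ψ r)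
    (hψasymp : Tendsto (fun r => ψ r / (a * r ^ q)) atTop (nhds 1))
    {ε : ℝ} (hε : 0 < ε) (hε1 : ε < 1) :
    ∀ᶠ r in atTop,
      1/((1+ε)*(a*(q-1))) * r ^ (1-q) ≤ (∫ t in Set.Ioi r, 1 / ψ t) ∧
      (∫ t in Set.Ioi r, 1 / ψ t) ≤ 1/((1-ε)*(a*(q-1))) * r ^ (1-q) := by
  obtain ⟨R, hR⟩ := (ev_bounds hq ha hψasymp hε hε1).exists_forall_of_atTop
  filter_upwards [eventually_ge_atTop (max R 1)] with r hrge
  have hrR : R ≤ r := le_trans (le_max_left _ _) hrge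
  have hrpos : (0:ℝ) < r := lt_of_lt_of_le one_pos (le_trans (le_max_right _ _) hrge)
  have hI1 : IntegrableOn (fun t => 1 / ψ t) (Set.Ioi r) :=
    integrableOn_inv_psi hq ha hcont hpos hψasymp hrpos
  have hIrpow : IntegrableOn (fun t : ℝ => t ^ (-q)) (Set.Ioi r) :=
    integrableOn_Ioi_rpow_of_lt (by linarith) hrpos
  have key : ∀ t ∈ Set.Ioi r, 0 < t ∧ 0 < ψ t ∧
      (1-ε) * (a * t ^ q) ≤ ψ t ∧ ψ t ≤ (1+ε) * (a * t ^ q) := by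
    intro t ht
    have htpos : 0 < t := lt_trans hrpos ht
    exact ⟨htpos, hpos t htpos, hR t (le_trans hrR ht.le)⟩
  have hconst : ∀ C : ℝ, (∫ t in Set.Ioi r, C * t ^ (-q)) = C/(q-1) * r ^ (1-q) := by
    intro C
    rw [MeasureTheory.integral_const_mul, integral_tail_rpow hq hrpos]
    ring
  constructor
  · have hmono : (∫ t in Set.Ioi r, 1/((1+ε)*a) * t ^ (-q)) ≤ ∫ t in Set.Ioi r, 1 / ψ t := by
      apply MeasureTheory.setIntegral_mono_on (hIrpow.const_mul _) hI1 measurableSet_Ioi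
      intro t ht
      obtain ⟨htpos, hψt, _, hub⟩ := key t ht
      have h1 : 1/((1+ε)*a) * t ^ (-q) = 1 / ((1+ε)*(a*t^q)) := by
        have hne3 : (t:ℝ)^q ≠ 0 := (Real.rpow_pos_of_pos htpos q).ne'
        rw [Real.rpow_neg htpos.le]
        field_simp
      rw [h1]
      exact one_div_le_one_div_of_le hψt hub
    rw [hconst] at hmono
    calc 1/((1+ε)*(a*(q-1))) * r ^ (1-q) = 1/((1+ε)*a)/(q-1) * r ^ (1-q) := by
          rw [div_div]; ring_nf
      _ ≤ _ := hmono
  · have hmono : (∫ t in Set.Ioi r, 1 / ψ t) ≤ ∫ t in Set.Ioi r, 1/((1-ε)*a) * t ^ (-q) := by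
      apply MeasureTheory.setIntegral_mono_on hI1 (hIrpow.const_mul _) measurableSet_Ioi
      intro t ht
      obtain ⟨htpos, hψt, hlb, _⟩ := key t ht
      have h1 : 1/((1-ε)*a) * t ^ (-q) = 1 / ((1-ε)*(a*t^q)) := by
        have hne3 : (t:ℝ)^q ≠ 0 := (Real.rpow_pos_of_pos htpos q).ne'
        have hne1 : (1:ℝ)-ε ≠ 0 := by linarith
        rw [Real.rpow_neg htpos.le]
        field_simp
      rw [h1]
      apply one_div_le_one_div_of_le
      · have : 0 < a * t^q := by positivity
        nlinarith
      · exact hlb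
    rw [hconst] at hmono
    calc (∫ t in Set.Ioi r, 1 / ψ t) ≤ 1/((1-ε)*a)/(q-1) * r ^ (1-q) := hmono
      _ = 1/((1-ε)*(a*(q-1))) * r ^ (1-q) := by rw [div_div]; ring_nf
end

section
variable {ψ : ℝ → ℝ} {q a n₁ : ℝ}

lemma F_ratio (hq : 1 < q) (ha : 0 < a)
    (hcont : ContinuousOn ψ (Set.Ioi 0)) (hpos : ∀ r > (0:ℝ), 0 < ψ r)
    (hψasymp : Tendsto (fun r => ψ r / (a * r ^ q)) atTop (nhds 1)) :
    Tendsto (fun r => (∫ t in Set.Ioi r, 1 / ψ t) / (1/(a*(q-1)) * r ^ (1-q)))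
      atTop (nhds 1) := by
  have hK : 0 < 1/(a*(q-1)) := by
    have : 0 < a*(q-1) := by nlinarith
    positivity
  rw [tendsto_order]
  constructor
  · intro l hl
    set ε := min (1/2 : ℝ) ((1-l)/2) with hεdef
    have hε : 0 < ε := lt_min (by norm_num) (by linarith)
    have hε1 : ε < 1 := lt_of_le_of_lt (min_le_left _ _) (by norm_num)
    have hεle : ε ≤ (1-l)/2 := min_le_right _ _
    filter_upwards [F_bounds hq ha hcont hpos hψasymp hε hε1, eventually_gt_atTop 0]
      with r hb hrpos
    have hP : (0:ℝ) < r ^ (1-q) := Real.rpow_pos_of_pos hrpos _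
    have hg : 0 < 1/(a*(q-1)) * r ^ (1-q) := by positivity
    rw [lt_div_iff₀ hg]
    have hkey : l * (1/(a*(q-1))) < 1/((1+ε)*(a*(q-1))) := by
      have h2 : 1/((1+ε)*(a*(q-1))) = (1/(a*(q-1)))/(1+ε) := by
        rw [div_div, mul_comm]
      rw [h2, lt_div_iff₀ (by linarith : (0:ℝ) < 1+ε)]
      have hl1 : l * (1+ε) < 1 := by nlinarith [mul_pos (sub_pos.mpr hl) hε]
      nlinarith
    calc l * (1/(a*(q-1)) * r ^ (1-q)) = (l * (1/(a*(q-1)))) * r ^ (1-q) := by ring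
      _ < 1/((1+ε)*(a*(q-1))) * r ^ (1-q) := mul_lt_mul_of_pos_right hkey hP
      _ ≤ _ := hb.1
  · intro u hu
    have hupos : (0:ℝ) < u := by linarith
    set ε := min (1/2 : ℝ) ((u-1)/(2*u)) with hεdef
    have hε : 0 < ε := lt_min (by norm_num) (div_pos (by linarith) (by linarith))
    have hε1 : ε < 1 := lt_of_le_of_lt (min_le_left _ _) (by norm_num)
    have hεle : ε ≤ (u-1)/(2*u) := min_le_right _ _
    filter_upwards [F_bounds hq ha hcont hpos hψasymp hε hε1, eventually_gt_atTop 0]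
      with r hb hrpos
    have hP : (0:ℝ) < r ^ (1-q) := Real.rpow_pos_of_pos hrpos _
    have hg : 0 < 1/(a*(q-1)) * r ^ (1-q) := by positivity
    rw [div_lt_iff₀ hg]
    have hfe : u * ((u-1)/(2*u)) = (u-1)/2 := by field_simp
    have huε : u * ε ≤ (u-1)/2 := by
      calc u * ε ≤ u * ((u-1)/(2*u)) := mul_le_mul_of_nonneg_left hεle hupos.le
        _ = (u-1)/2 := hfe
    have hkey : 1/((1-ε)*(a*(q-1))) < u * (1/(a*(q-1))) := by
      have h2 : 1/((1-ε)*(a*(q-1))) = (1/(a*(q-1)))/(1-ε) := by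
        rw [div_div, mul_comm]
      rw [h2, div_lt_iff₀ (by linarith : (0:ℝ) < 1-ε)]
      have h3 : 1 < u * (1-ε) := by nlinarith
      nlinarith
    calc (∫ t in Set.Ioi r, 1 / ψ t) ≤ 1/((1-ε)*(a*(q-1))) * r ^ (1-q) := hb.2
      _ < (u * (1/(a*(q-1)))) * r ^ (1-q) := mul_lt_mul_of_pos_right hkey hP
      _ = u * (1/(a*(q-1)) * r ^ (1-q)) := by ring

end

section
variable {ψ : ℝ → ℝ} {q a n₁ : ℝ}

lemma Svar2_ratio (hn₁ : 2 < n₁) (hq : 1 < q) (ha : 0 < a)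
    (hcont : ContinuousOn ψ (Set.Ioi 0)) (hpos : ∀ r > (0:ℝ), 0 < ψ r)
    (hψasymp : Tendsto (fun r => ψ r / (a * r ^ q)) atTop (nhds 1))
    {c : ℝ} (hc : c = (a * (q - 1) / (n₁ - 2)) ^ (1 / (n₁ - 2))) :
    Tendsto (fun r => Svar2 n₁ ψ r / (c * r ^ ((q - 1) / (n₁ - 2))))
      atTop (nhds 1) := by
  have hn2 : (0:ℝ) < n₁ - 2 := by linarith
  have hw : (0:ℝ) < a * (q-1) / (n₁ - 2) := by
    apply div_pos (by nlinarith) hn2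
  have hcpos : 0 < c := hc ▸ Real.rpow_pos_of_pos hw _
  set e := -(1/(n₁-2)) with he
  set u := fun r => (∫ t in Set.Ioi r, 1 / ψ t) / (1/(a*(q-1)) * r ^ (1-q)) with hu
  have hT : Tendsto u atTop (nhds 1) := F_ratio hq ha hcont hpos hψasymp
  have hTe : Tendsto (fun r => u r ^ e) atTop (nhds 1) := by
    have := hT.rpow_const (p := e) (Or.inl one_ne_zero)
    rwa [Real.one_rpow] at this
  apply hTe.congr'
  filter_upwards [eventually_gt_atTop 0] with r hrpos
  have hF : 0 < ∫ t in Set.Ioi r, 1 / ψ t :=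
    F_pos hpos hrpos (integrableOn_inv_psi hq ha hcont hpos hψasymp hrpos)
  have hKP : (0:ℝ) < 1/(a*(q-1)) * r ^ (1-q) := by
    have h1 : (0:ℝ) < a*(q-1) := by nlinarith
    have h2 : (0:ℝ) < r ^ (1-q) := Real.rpow_pos_of_pos hrpos _
    positivity
  have hupos : 0 < u r := div_pos hF hKP
  have h0 : u r * (1/(a*(q-1)) * r ^ (1-q)) = ∫ t in Set.Ioi r, 1 / ψ t :=
    div_mul_cancel₀ _ hKP.ne'
  have hsplit : (n₁ - 2) * ∫ t in Set.Ioi r, 1 / ψ t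
      = u r * ((n₁-2) * (1/(a*(q-1))) * r ^ (1-q)) := by
    calc (n₁-2) * ∫ t in Set.Ioi r, 1 / ψ t
        = (n₁-2) * (u r * (1/(a*(q-1)) * r ^ (1-q))) := by rw [h0]
      _ = u r * ((n₁-2) * (1/(a*(q-1))) * r ^ (1-q)) := by ring
  have h1' : (0:ℝ) < a*(q-1) := by nlinarith
  have hnk : 0 < (n₁-2) * (1/(a*(q-1))) := by positivity
  have hB : (0:ℝ) < (n₁-2) * (1/(a*(q-1))) * r ^ (1-q) := by
    have h2 : (0:ℝ) < r ^ (1-q) := Real.rpow_pos_of_pos hrpos _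
    positivity
  have hBe : ((n₁-2) * (1/(a*(q-1))) * r ^ (1-q)) ^ e = c * r ^ ((q-1)/(n₁-2)) := by
    rw [Real.mul_rpow hnk.le (Real.rpow_pos_of_pos hrpos _).le]
    congr 1
    · have h1 : (n₁-2) * (1/(a*(q-1))) = (a * (q-1) / (n₁-2))⁻¹ := by
        field_simp
      rw [h1, Real.inv_rpow hw.le, he, Real.rpow_neg hw.le, inv_inv, hc]
    · rw [← Real.rpow_mul hrpos.le]
      congr 1
      rw [he]
      ring
  have hS : Svar2 n₁ ψ r = u r ^ e * (c * r ^ ((q-1)/(n₁-2))) := by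
    unfold Svar2
    rw [hsplit, Real.mul_rpow hupos.le hB.le, hBe, he]
  show u r ^ e = Svar2 n₁ ψ r / (c * r ^ ((q-1)/(n₁-2)))
  rw [hS, mul_div_cancel_right₀ _
    (mul_pos hcpos (Real.rpow_pos_of_pos hrpos _)).ne']
end

section
variable {ψ : ℝ → ℝ} {q a n₁ : ℝ}

lemma Svar2_pos (hn₁ : 2 < n₁) (hpos : ∀ r > (0:ℝ), 0 < ψ r)
    (hq : 1 < q) (ha : 0 < a)
    (hcont : ContinuousOn ψ (Set.Ioi 0))
    (hψasymp : Tendsto (fun r => ψ r / (a * r ^ q)) atTop (nhds 1))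
    {r : ℝ} (hr : 0 < r) : 0 < Svar2 n₁ ψ r := by
  have hF : 0 < ∫ t in Set.Ioi r, 1 / ψ t :=
    F_pos hpos hr (integrableOn_inv_psi hq ha hcont hpos hψasymp hr)
  exact Real.rpow_pos_of_pos (by nlinarith) _

lemma Svar2_strictMono (hn₁ : 2 < n₁) (hpos : ∀ r > (0:ℝ), 0 < ψ r)
    (hq : 1 < q) (ha : 0 < a)
    (hcont : ContinuousOn ψ (Set.Ioi 0))
    (hψasymp : Tendsto (fun r => ψ r / (a * r ^ q)) atTop (nhds 1))
    {r₁ r₂ : ℝ} (h1 : 0 < r₁) (h12 : r₁ < r₂) :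
    Svar2 n₁ ψ r₁ < Svar2 n₁ ψ r₂ := by
  have hintall : ∀ r > (0:ℝ), IntegrableOn (fun t => 1 / ψ t) (Set.Ioi r) :=
    fun r hr => integrableOn_inv_psi hq ha hcont hpos hψasymp hr
  have h2 : (0:ℝ) < r₂ := lt_trans h1 h12
  have hF2 : 0 < ∫ t in Set.Ioi r₂, 1 / ψ t := F_pos hpos h2 (hintall r₂ h2)
  have hlt : (∫ t in Set.Ioi r₂, 1 / ψ t) < ∫ t in Set.Ioi r₁, 1 / ψ t :=
    F_strict_anti hpos hintall h1 h12
  exact Real.rpow_lt_rpow_of_neg (by nlinarith)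
    (by nlinarith) (by
      have hn2 : (0:ℝ) < n₁ - 2 := by linarith
      rw [neg_lt, neg_zero]
      positivity)

lemma Svar2_contAt (hn₁ : 2 < n₁) (hpos : ∀ r > (0:ℝ), 0 < ψ r)
    (hq : 1 < q) (ha : 0 < a)
    (hcont : ContinuousOn ψ (Set.Ioi 0))
    (hψasymp : Tendsto (fun r => ψ r / (a * r ^ q)) atTop (nhds 1))
    {x : ℝ} (hx : 0 < x) : ContinuousAt (Svar2 n₁ ψ) x := by
  have hintall : ∀ r > (0:ℝ), IntegrableOn (fun t => 1 / ψ t) (Set.Ioi r) :=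
    fun r hr => integrableOn_inv_psi hq ha hcont hpos hψasymp hr
  have hF : 0 < ∫ t in Set.Ioi x, 1 / ψ t := F_pos hpos hx (hintall x hx)
  exact ContinuousAt.rpow_const
    (continuousAt_const.mul (F_contAt hcont hpos hintall hx))
    (Or.inl (by nlinarith))

lemma Svar2_atTop (hn₁ : 2 < n₁) (hpos : ∀ r > (0:ℝ), 0 < ψ r)
    (hq : 1 < q) (ha : 0 < a)
    (hcont : ContinuousOn ψ (Set.Ioi 0))
    (hψasymp : Tendsto (fun r => ψ r / (a * r ^ q)) atTop (nhds 1)) :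
    Tendsto (Svar2 n₁ ψ) atTop atTop := by
  have hn2 : (0:ℝ) < n₁ - 2 := by linarith
  have hw : (0:ℝ) < a * (q-1) / (n₁ - 2) := div_pos (by nlinarith) hn2
  set c := (a * (q - 1) / (n₁ - 2)) ^ (1 / (n₁ - 2)) with hc
  have hcpos : 0 < c := Real.rpow_pos_of_pos hw _
  have hratio := Svar2_ratio hn₁ hq ha hcont hpos hψasymp (hc.symm ▸ rfl : c = _)
  have hca : Tendsto (fun r : ℝ => c * r ^ ((q-1)/(n₁-2))) atTop atTop :=
    (tendsto_rpow_atTop (div_pos (by linarith) hn2)).const_mul_atTop hcpos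
  have := hca.atTop_mul_pos one_pos hratio
  apply this.congr'
  filter_upwards [eventually_gt_atTop 0] with r hrpos
  have : c * r ^ ((q-1)/(n₁-2)) ≠ 0 :=
    (mul_pos hcpos (Real.rpow_pos_of_pos hrpos _)).ne'
  field_simp

lemma Svar2_zero (hn₁ : 2 < n₁) (hψA : classA ψ)
    (hq : 1 < q) (ha : 0 < a)
    (hcont : ContinuousOn ψ (Set.Ioi 0))
    (hψasymp : Tendsto (fun r => ψ r / (a * r ^ q)) atTop (nhds 1)) :
    Tendsto (Svar2 n₁ ψ) (nhdsWithin 0 (Set.Ioi 0)) (nhds 0) := by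
  have hpos := hψA.2.2.2.2
  have hintall : ∀ r > (0:ℝ), IntegrableOn (fun t => 1 / ψ t) (Set.Ioi r) :=
    fun r hr => integrableOn_inv_psi hq ha hcont hpos hψasymp hr
  have hF := F_tendsto_top hψA hintall
  have h1 : Tendsto (fun r => (n₁-2) * ∫ t in Set.Ioi r, 1 / ψ t)
      (nhdsWithin 0 (Set.Ioi 0)) atTop := hF.const_mul_atTop (by linarith)
  have h2 : Tendsto (fun x : ℝ => x ^ (-(1/(n₁-2)))) atTop (nhds 0) :=
    tendsto_rpow_neg_atTop (by have hn2 : (0:ℝ) < n₁ - 2 := by linarith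
                               positivity)
  exact h2.comp h1

lemma Svar2_surj (hn₁ : 2 < n₁) (hψA : classA ψ)
    (hq : 1 < q) (ha : 0 < a)
    (hcont : ContinuousOn ψ (Set.Ioi 0))
    (hψasymp : Tendsto (fun r => ψ r / (a * r ^ q)) atTop (nhds 1))
    {s : ℝ} (hs : 0 < s) : ∃ r, 0 < r ∧ Svar2 n₁ ψ r = s := by
  have hpos := hψA.2.2.2.2
  have h0 := (Svar2_zero hn₁ hψA hq ha hcont hψasymp).eventually_lt_const hs
  obtain ⟨r₁, hr₁lt, hr₁pos⟩ := (h0.and self_mem_nhdsWithin).exists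
  have htop := (Svar2_atTop hn₁ hpos hq ha hcont hψasymp).eventually_gt_atTop s
  obtain ⟨r₂, hr₂gt, hr₁₂⟩ := (htop.and (eventually_ge_atTop r₁)).exists
  have hr₁p : (0:ℝ) < r₁ := hr₁pos
  have hCont : ContinuousOn (Svar2 n₁ ψ) (Set.Icc r₁ r₂) := fun x hx =>
    (Svar2_contAt hn₁ hpos hq ha hcont hψasymp (lt_of_lt_of_le hr₁p hx.1)).continuousWithinAt
  have := intermediate_value_Icc hr₁₂ hCont
  obtain ⟨r, hrmem, hSr⟩ := this ⟨hr₁lt.le, hr₂gt.le⟩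
  exact ⟨r, lt_of_lt_of_le hr₁p hrmem.1, hSr⟩

end

section
variable {ψ : ℝ → ℝ} {q a n₁ : ℝ}

lemma ctil_mul_cE (hn₁ : 2 < n₁) (hq : 1 < q) (ha : 0 < a)
    {c ctil : ℝ}
    (hc : c = (a * (q - 1) / (n₁ - 2)) ^ (1 / (n₁ - 2)))
    (hctil : ctil = a ^ 2 * ((n₁ - 2) / (a * (q - 1))) ^ (2 * q / (q - 1))) :
    ctil * c ^ (2*q*(n₁-2)/(q-1)) = a^2 := by
  have hn2 : (0:ℝ) < n₁ - 2 := by linarith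
  have haq : (0:ℝ) < a * (q-1) := by nlinarith
  have hw : (0:ℝ) < a * (q-1) / (n₁ - 2) := div_pos haq hn2
  have hcE : c ^ (2*q*(n₁-2)/(q-1)) = (a * (q-1) / (n₁-2)) ^ (2*q/(q-1)) := by
    rw [hc, ← Real.rpow_mul hw.le]
    congr 1
    field_simp
  have hinv : (n₁-2) / (a*(q-1)) = (a * (q-1) / (n₁-2))⁻¹ := by
    field_simp
  rw [hctil, hcE, hinv, mul_assoc, ← Real.mul_rpow (inv_nonneg.mpr hw.le) hw.le,
    inv_mul_cancel₀ hw.ne', Real.one_rpow, mul_one]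

lemma weight_ratio (hn₁ : 2 < n₁) (hq : 1 < q) (ha : 0 < a)
    (hcont : ContinuousOn ψ (Set.Ioi 0)) (hpos : ∀ r > (0:ℝ), 0 < ψ r)
    (hψasymp : Tendsto (fun r => ψ r / (a * r ^ q)) atTop (nhds 1))
    {c ctil : ℝ}
    (hc : c = (a * (q - 1) / (n₁ - 2)) ^ (1 / (n₁ - 2)))
    (hctil : ctil = a ^ 2 * ((n₁ - 2) / (a * (q - 1))) ^ (2 * q / (q - 1))) :
    Tendsto (fun r =>
        (ψ r ^ 2 / Svar2 n₁ ψ r ^ (2 * (n₁ - 1))) /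
          (ctil * Svar2 n₁ ψ r ^ (2 * (n₁ - q - 1) / (q - 1))))
      atTop (nhds 1) := by
  have hn2 : (0:ℝ) < n₁ - 2 := by linarith
  have hq1 : (0:ℝ) < q - 1 := by linarith
  have haq : (0:ℝ) < a * (q-1) := by nlinarith
  have hw : (0:ℝ) < a * (q-1) / (n₁ - 2) := div_pos haq hn2
  have hcpos : 0 < c := hc ▸ Real.rpow_pos_of_pos hw _
  have hctilpos : 0 < ctil := by
    rw [hctil]
    have : (0:ℝ) < (n₁-2)/(a*(q-1)) := div_pos hn2 haq
    positivity
  set α := (q-1)/(n₁-2) with hα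
  set E := 2*q*(n₁-2)/(q-1) with hE
  set u := fun r => ψ r / (a * r ^ q) with hu
  set v := fun r => Svar2 n₁ ψ r / (c * r ^ α) with hv
  have hvT : Tendsto v atTop (nhds 1) := Svar2_ratio hn₁ hq ha hcont hpos hψasymp hc
  have hlim : Tendsto (fun r => u r ^ 2 / v r ^ E) atTop (nhds 1) := by
    have h1 : Tendsto (fun r => u r ^ 2) atTop (nhds 1) := by
      have := hψasymp.pow 2
      rwa [one_pow] at this
    have h2 : Tendsto (fun r => v r ^ E) atTop (nhds 1) := by
      have := hvT.rpow_const (p := E) (Or.inl one_ne_zero)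
      rwa [Real.one_rpow] at this
    have := h1.div h2 one_ne_zero
    rwa [div_one] at this
  apply hlim.congr'
  filter_upwards [eventually_gt_atTop 0] with r hrpos
  have hψr : 0 < ψ r := hpos r hrpos
  have hrq : (0:ℝ) < r ^ q := Real.rpow_pos_of_pos hrpos q
  have hrα : (0:ℝ) < r ^ α := Real.rpow_pos_of_pos hrpos α
  have hS : 0 < Svar2 n₁ ψ r := Svar2_pos hn₁ hpos hq ha hcont hψasymp hrpos
  have hupos : 0 < u r := div_pos hψr (by positivity)
  have hvpos : 0 < v r := div_pos hS (by positivity)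
  have hψeq : ψ r = u r * (a * r ^ q) := (div_mul_cancel₀ _ (by positivity)).symm
  have hSeq : Svar2 n₁ ψ r = v r * (c * r ^ α) := (div_mul_cancel₀ _ (by positivity)).symm
  have hAE : 2*(n₁-1) + 2*(n₁-q-1)/(q-1) = E := by
    rw [hE]
    field_simp
    ring
  have hαE : α * E = 2*q := by
    rw [hα, hE]
    field_simp
  -- numerator
  have hnum : ψ r ^ 2 = u r ^ 2 * (a^2 * r ^ (2*q)) := by
    rw [hψeq, mul_pow, mul_pow]
    congr 1
    congr 1
    rw [← Real.rpow_natCast (r ^ q) 2, ← Real.rpow_mul hrpos.le]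
    norm_num
    rw [mul_comm]
  -- denominator
  have hSE : Svar2 n₁ ψ r ^ E = v r ^ E * (c ^ E * r ^ (2*q)) := by
    rw [hSeq, Real.mul_rpow hvpos.le (by positivity),
      Real.mul_rpow hcpos.le hrα.le, ← Real.rpow_mul hrpos.le, hαE]
  have hcomb : Svar2 n₁ ψ r ^ (2*(n₁-1)) * Svar2 n₁ ψ r ^ (2*(n₁-q-1)/(q-1))
      = Svar2 n₁ ψ r ^ E := by
    rw [← Real.rpow_add hS, hAE]
  have hX : (0:ℝ) < a^2 * r ^ (2*q) := by positivity
  calc u r ^ 2 / v r ^ E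
      = (u r ^ 2 * (a^2 * r ^ (2*q))) / (v r ^ E * (a^2 * r ^ (2*q))) :=
        (mul_div_mul_right _ _ hX.ne').symm
    _ = (ψ r ^ 2 / Svar2 n₁ ψ r ^ (2 * (n₁ - 1))) /
          (ctil * Svar2 n₁ ψ r ^ (2 * (n₁ - q - 1) / (q - 1))) := by
        rw [← hnum, div_div]
        congr 1
        have hre : Svar2 n₁ ψ r ^ (2 * (n₁ - 1)) * (ctil * Svar2 n₁ ψ r ^ (2 * (n₁ - q - 1) / (q - 1)))
            = ctil * (Svar2 n₁ ψ r ^ (2 * (n₁ - 1)) * Svar2 n₁ ψ r ^ (2 * (n₁ - q - 1) / (q - 1))) := by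
          ring
        rw [hre, hcomb, hSE, ← ctil_mul_cE hn₁ hq ha hc hctil]
        ring
end


/-- Section 7.4 of the paper: the 2-dimensional change of variables,
quasi-Euclidean models I. Let `n₁ > 2` be real, `q > 1`, `a > 0` and `ψ ∈ 𝒜` with
`ψ(r) ∼ a r^q`. Then `∫₁^∞ ψ^{-1} < ∞`, `s(r) ∼ c r^{(q-1)/(n₁-2)}` as `r → +∞` with
`c = (a(q-1)/(n₁-2))^{1/(n₁-2)}`, and the weight `ρ(s) = ψ(r(s))²/s^{2(n₁-1)}`
satisfies `ρ(s) ∼ c̃ s^{2(n₁-q-1)/(q-1)}` with `c̃ = a²((n₁-2)/(a(q-1)))^{2q/(q-1)}`. -/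
theorem stmt_14
    (n₁ : ℝ) (hn₁ : 2 < n₁) (q a : ℝ) (hq : 1 < q) (ha : 0 < a)
    (ψ : ℝ → ℝ) (hψA : classA ψ)
    (hψasymp : Filter.Tendsto (fun r => ψ r / (a * r ^ q)) Filter.atTop (nhds 1))
    (c ctil : ℝ)
    (hc : c = (a * (q - 1) / (n₁ - 2)) ^ (1 / (n₁ - 2)))
    (hctil : ctil = a ^ 2 * ((n₁ - 2) / (a * (q - 1))) ^ (2 * q / (q - 1))) :
    MeasureTheory.IntegrableOn (fun t => 1 / ψ t) (Set.Ioi 1) ∧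
    Filter.Tendsto (fun r => Svar2 n₁ ψ r / (c * r ^ ((q - 1) / (n₁ - 2))))
      Filter.atTop (nhds 1) ∧
    ∃ rOf : ℝ → ℝ,
      (∀ r > (0 : ℝ), rOf (Svar2 n₁ ψ r) = r) ∧
      (∀ s > (0 : ℝ), Svar2 n₁ ψ (rOf s) = s) ∧
      Filter.Tendsto (fun s =>
          (ψ (rOf s) ^ 2 / s ^ (2 * (n₁ - 1))) /
            (ctil * s ^ (2 * (n₁ - q - 1) / (q - 1))))
        Filter.atTop (nhds 1) := by
  classical
  have hcont : ContinuousOn ψ (Set.Ioi 0) := hψA.1.continuousOn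
  have hpos : ∀ r > (0:ℝ), 0 < ψ r := hψA.2.2.2.2
  refine ⟨integrableOn_inv_psi hq ha hcont hpos hψasymp one_pos,
    Svar2_ratio hn₁ hq ha hcont hpos hψasymp hc, ?_⟩
  set rOf : ℝ → ℝ := fun s =>
    if h : ∃ r, 0 < r ∧ Svar2 n₁ ψ r = s then h.choose else 0 with hrOf
  have key : ∀ s > (0:ℝ), 0 < rOf s ∧ Svar2 n₁ ψ (rOf s) = s := by
    intro s hs
    have hex : ∃ r, 0 < r ∧ Svar2 n₁ ψ r = s :=
      Svar2_surj hn₁ hψA hq ha hcont hψasymp hs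
    simp only [hrOf, dif_pos hex]
    exact hex.choose_spec
  have hmono : ∀ r₁ r₂ : ℝ, 0 < r₁ → r₁ < r₂ → Svar2 n₁ ψ r₁ < Svar2 n₁ ψ r₂ :=
    fun r₁ r₂ h1 h12 => Svar2_strictMono hn₁ hpos hq ha hcont hψasymp h1 h12
  refine ⟨rOf, ?_, fun s hs => (key s hs).2, ?_⟩
  · intro r hr
    have hS : 0 < Svar2 n₁ ψ r := Svar2_pos hn₁ hpos hq ha hcont hψasymp hr
    obtain ⟨hr', hS'⟩ := key (Svar2 n₁ ψ r) hS
    rcases lt_trichotomy (rOf (Svar2 n₁ ψ r)) r with h | h | h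
    · exact absurd hS' (ne_of_lt (hmono _ _ hr' h))
    · exact h
    · exact absurd hS'.symm (ne_of_lt (hmono _ _ hr h))
  · have hrOftop : Tendsto rOf atTop atTop := by
      rw [tendsto_atTop]
      intro X
      set X' := max X 1 with hX'
      have hX'pos : (0:ℝ) < X' := lt_of_lt_of_le one_pos (le_max_right _ _)
      filter_upwards [eventually_gt_atTop (max (Svar2 n₁ ψ X') 0)] with s hsgt
      have hs : (0:ℝ) < s := lt_of_le_of_lt (le_max_right _ _) hsgt
      obtain ⟨hr', hS'⟩ := key s hs
      have hgt : Svar2 n₁ ψ X' < Svar2 n₁ ψ (rOf s) := by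
        rw [hS']; exact lt_of_le_of_lt (le_max_left _ _) hsgt
      by_contra hcon
      push_neg at hcon
      have hlt : rOf s < X' := lt_of_lt_of_le hcon (le_max_left _ _)
      exact absurd hgt (not_lt.mpr (le_of_lt (hmono _ _ hr' hlt)))
    have hH := weight_ratio hn₁ hq ha hcont hpos hψasymp hc hctil
    apply (hH.comp hrOftop).congr'
    filter_upwards [eventually_gt_atTop 0] with s hs
    obtain ⟨hr', hS'⟩ := key s hs
    simp only [Function.comp_apply]
    rw [hS']
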